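/- Consider a φ-smooth step-function congestion game with n players, m resources, and d ≥ 2 total breakpoints, where the jump values {a_{r,j}}_{r ∈ R, j ∈ [d_r]} are independent φ-smooth random variables (the breakpoints are fixed). Fix ε > 0, and let T be the supremum, over all starting profiles and all sequences of consecutive (1+ε)-improving moves, of the length of the sequence. Then E[T] ≤ φ·(1 + 1/ε)·n·d²·(m·ln(n+1) + ln d) + 1. -/

import Mathlib

open MeasureTheory ProbabilityTheory

/-- The load of resource `r` under strategy profile `s`: the number of players using `r`. -/
def load {n m : ℕ} (s : Fin n → Finset (Fin m)) (r : Fin m) : ℕ :=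
  (Finset.univ.filter fun i => r ∈ s i).card

/-- The cost of player `i` under profile `s`, with resource costs `cost r ℓ`. -/
def playerCost {n m : ℕ} (cost : Fin m → ℕ → ℝ) (s : Fin n → Finset (Fin m)) (i : Fin n) : ℝ :=
  ∑ r ∈ s i, cost r (load s r)

/-- Rosenthal's potential `Φ(s) = Σ_{r ∈ R} Σ_{j=1}^{ℓ_r(s)} c_r(j)`. -/
def potential {n m : ℕ} (cost : Fin m → ℕ → ℝ) (s : Fin n → Finset (Fin m)) : ℝ :=
  ∑ r : Fin m, ∑ j ∈ Finset.Icc 1 (load s r), cost r j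

/-- A strategy profile is valid when each player plays a strategy from their strategy set. -/
def ValidProfile {n m : ℕ} (strat : Fin n → Set (Finset (Fin m)))
    (s : Fin n → Finset (Fin m)) : Prop :=
  ∀ i, s i ∈ strat i

/-- An `(1+ε)`-improving move from `s` to `s'`: some player `i` deviates to a strategy
`si' ∈ S_i` with `(1+ε)·C_i(s') < C_i(s)`. -/
def ImprovingMove {n m : ℕ} (strat : Fin n → Set (Finset (Fin m))) (cost : Fin m → ℕ → ℝ)
    (ε : ℝ) (s s' : Fin n → Finset (Fin m)) : Prop :=
  ∃ i : Fin n, ∃ si' ∈ strat i, s' = Function.update s i si' ∧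
    (1 + ε) * playerCost cost s' i < playerCost cost s i

/-- The step-function resource cost: resource `r` has `dr r` breakpoints `b r` with jump
values `a r`, and `c_r(ℓ) = Σ_{j : b_{r,j} ≤ ℓ} a_{r,j}`. -/
def stepCost {m : ℕ} (dr : Fin m → ℕ) (b : (r : Fin m) → Fin (dr r) → ℕ)
    (a : (r : Fin m) → Fin (dr r) → ℝ) : Fin m → ℕ → ℝ :=
  fun r ℓ => ∑ j ∈ Finset.univ.filter (fun j => b r j ≤ ℓ), a r j

/-- A `φ`-smooth random variable: a real-valued random variable taking values in `[0,1]`,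
absolutely continuous with density bounded above by `φ`. -/
def PhiSmooth {Ω : Type*} [MeasurableSpace Ω] (P : Measure Ω) (φ : ℝ) (X : Ω → ℝ) : Prop :=
  Measurable X ∧ ∃ f : ℝ → ENNReal,
    Measure.map X P = volume.withDensity f ∧
    (∀ x, f x ≤ ENNReal.ofReal φ) ∧ ∀ x, x ∉ Set.Icc (0 : ℝ) 1 → f x = 0

/-- The supremum, over all starting profiles and all sequences of consecutive
`(1+ε)`-improving moves, of the length of the sequence. -/
noncomputable def maxImprovingSeqLen {n m : ℕ} (strat : Fin n → Set (Finset (Fin m)))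
    (cost : Fin m → ℕ → ℝ) (ε : ℝ) : ℕ :=
  sSup {T : ℕ | ∃ s : ℕ → Fin n → Finset (Fin m),
    (∀ k ≤ T, ValidProfile strat (s k)) ∧
    ∀ k < T, ImprovingMove strat cost ε (s k) (s (k + 1))}

/-!
Rosenthal's potential changes exactly as the moving player's cost does, so a `(1+ε)`-improving
move lowers it by more than `ε/(1+ε)` times that player's cost, which is at least the smallest
jump value. The potential lies in `[0, n·d]` and takes at most `(n+1)^m` values, so a sequence
of `t` improving moves forces some jump value below `(1+1/ε)·n·d/t`, an event of probability at
most `d·φ·(1+1/ε)·n·d/t`. Summing these tail bounds over `2 ≤ t ≤ (n+1)^m` gives a harmonic sum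
of at most `m·ln(n+1)`.
-/

open Finset

section Potential

variable {n m : ℕ}

lemma load_le (s : Fin n → Finset (Fin m)) (r : Fin m) : load s r ≤ n :=
  (card_filter_le _ _).trans_eq (card_fin n)

lemma load_update (s : Fin n → Finset (Fin m)) (i : Fin n) (t : Finset (Fin m)) (r : Fin m) :
    load (Function.update s i t) r = load (Function.update s i ∅) r + if r ∈ t then 1 else 0 := by
  classical
  simp only [load, card_filter]
  rw [Fintype.sum_eq_add_sum_compl i,
    Fintype.sum_eq_add_sum_compl i (fun j => if r ∈ Function.update s i ∅ j then 1 else 0)]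
  simp only [Function.update_self, notMem_empty, if_false, zero_add, add_comm]
  refine congrArg _ (sum_congr rfl fun j hj => ?_)
  rw [Function.update_of_ne (by simpa using hj), Function.update_of_ne (by simpa using hj)]

variable (cost : Fin m → ℕ → ℝ)

/-- Rosenthal's decomposition; `Function.update s i ∅` is the profile without player `i`. -/
lemma potential_eq_add_playerCost (s : Fin n → Finset (Fin m)) (i : Fin n) :
    potential cost s = potential cost (Function.update s i ∅) + playerCost cost s i := by
  classical
  have hres : ∀ r, ∑ j ∈ Icc 1 (load s r), cost r j =
      ∑ j ∈ Icc 1 (load (Function.update s i ∅) r), cost r j +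
        if r ∈ s i then cost r (load s r) else 0 := by
    intro r
    have hload := load_update s i (s i) r
    rw [Function.update_eq_self] at hload
    split_ifs at hload ⊢
    · rw [hload, sum_Icc_succ_top (by omega)]
    · rw [hload, add_zero, add_zero]
  rw [potential, sum_congr rfl fun r _ => hres r, sum_add_distrib, sum_ite_mem, univ_inter]
  rfl

lemma potential_update_sub (s : Fin n → Finset (Fin m)) (i : Fin n) (t : Finset (Fin m)) :
    potential cost (Function.update s i t) - potential cost s =
      playerCost cost (Function.update s i t) i - playerCost cost s i := by
  classical
  rw [potential_eq_add_playerCost cost s i,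
    potential_eq_add_playerCost cost (Function.update s i t) i, Function.update_idem]
  ring

variable {cost}

lemma potential_nonneg (hcost : ∀ r ℓ, 0 ≤ cost r ℓ) (s : Fin n → Finset (Fin m)) :
    0 ≤ potential cost s :=
  sum_nonneg fun r _ => sum_nonneg fun ℓ _ => hcost r ℓ

lemma playerCost_nonneg (hcost : ∀ r ℓ, 0 ≤ cost r ℓ) (s : Fin n → Finset (Fin m)) (i : Fin n) :
    0 ≤ playerCost cost s i :=
  sum_nonneg fun r _ => hcost r _

lemma potential_le {B : Fin m → ℝ} (hB : ∀ r ℓ, cost r ℓ ≤ B r) (hB0 : ∀ r, 0 ≤ B r)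
    (s : Fin n → Finset (Fin m)) : potential cost s ≤ n * ∑ r, B r := by
  rw [mul_sum]
  refine sum_le_sum fun r _ => ?_
  calc ∑ ℓ ∈ Icc 1 (load s r), cost r ℓ ≤ (Icc 1 (load s r)).card • B r :=
        sum_le_card_nsmul _ _ _ fun ℓ _ => hB r ℓ
    _ = load s r * B r := by simp
    _ ≤ n * B r := mul_le_mul_of_nonneg_right (by exact_mod_cast load_le s r) (hB0 r)

lemma potential_mem_image (s : Fin n → Finset (Fin m)) :
    potential cost s ∈ (univ : Finset (Fin m → Fin (n + 1))).image
      fun ℓ => ∑ r, ∑ j ∈ Icc 1 (ℓ r : ℕ), cost r j :=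
  mem_image.2 ⟨fun r => ⟨load s r, Nat.lt_succ_of_le (load_le s r)⟩, mem_univ _, rfl⟩

lemma ImprovingMove.potential_add_lt {strat : Fin n → Set (Finset (Fin m))} {ε δ : ℝ}
    {s s' : Fin n → Finset (Fin m)} (h : ImprovingMove strat cost ε s s') (hε : 0 ≤ ε)
    (hδ : ∀ i, δ ≤ playerCost cost s i) :
    potential cost s' + ε / (1 + ε) * δ < potential cost s := by
  obtain ⟨i, t, -, rfl, hlt⟩ := h
  have hdiff := potential_update_sub cost s i t
  have hδi : ε / (1 + ε) * δ ≤ ε / (1 + ε) * playerCost cost s i := by gcongr; exact hδ i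
  have hdrop : ε / (1 + ε) * playerCost cost s i <
      playerCost cost s i - playerCost cost (Function.update s i t) i := by
    rw [div_mul_eq_mul_div, div_lt_iff₀ (by positivity)]
    linarith
  linarith

end Potential

section Chain

variable {n m : ℕ} {strat : Fin n → Set (Finset (Fin m))} {cost : Fin m → ℕ → ℝ} {ε : ℝ}
  {s : ℕ → Fin n → Finset (Fin m)} {T : ℕ}

variable (strat cost ε) in
/-- `maxImprovingSeqLen strat cost ε` is, by definition, the supremum of the `T` admitting such
an `s`. -/
def IsImprovingChain (s : ℕ → Fin n → Finset (Fin m)) (T : ℕ) : Prop :=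
  (∀ k ≤ T, ValidProfile strat (s k)) ∧ ∀ k < T, ImprovingMove strat cost ε (s k) (s (k + 1))

lemma IsImprovingChain.mono (h : IsImprovingChain strat cost ε s T) {t : ℕ} (ht : t ≤ T) :
    IsImprovingChain strat cost ε s t :=
  ⟨fun k hk => h.1 k (hk.trans ht), fun k hk => h.2 k (hk.trans_le ht)⟩

lemma IsImprovingChain.potential_add_lt (h : IsImprovingChain strat cost ε s T) (hε : 0 ≤ ε)
    {δ : ℝ} (hδ : ∀ s, ValidProfile strat s → ∀ i, δ ≤ playerCost cost s i) (hT : 0 < T) :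
    potential cost (s T) + T * (ε / (1 + ε) * δ) < potential cost (s 0) := by
  induction T with
  | zero => omega
  | succ T ih =>
    have hstep := (h.2 T T.lt_succ_self).potential_add_lt hε (hδ _ (h.1 T T.le_succ))
    rcases T.eq_zero_or_pos with rfl | hT
    · simpa using hstep
    · have hprefix := ih (h.mono T.le_succ) hT
      push_cast
      linarith

lemma IsImprovingChain.strictAntiOn_potential (h : IsImprovingChain strat cost ε s T)
    (hε : 0 ≤ ε) (hcost : ∀ r ℓ, 0 ≤ cost r ℓ) :
    StrictAntiOn (fun k => potential cost (s k)) (Set.Iic T) :=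
  strictAntiOn_Iic_of_succ_lt fun k hk => by
    simpa using (h.2 k hk).potential_add_lt hε fun i => playerCost_nonneg hcost (s k) i

/-- An injective walk through the at most `(n+1)^m` values of the potential. -/
lemma IsImprovingChain.length_lt (h : IsImprovingChain strat cost ε s T) (hε : 0 ≤ ε)
    (hcost : ∀ r ℓ, 0 ≤ cost r ℓ) : T < (n + 1) ^ m :=
  calc T < (Iic T).card := by simp
    _ ≤ ((univ : Finset (Fin m → Fin (n + 1))).image
          fun ℓ => ∑ r, ∑ j ∈ Icc 1 (ℓ r : ℕ), cost r j).card :=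
        card_le_card_of_injOn _ (fun k _ => potential_mem_image (s k))
          (by rw [coe_Iic]; exact (h.strictAntiOn_potential hε hcost).injOn)
    _ ≤ (n + 1) ^ m := card_image_le.trans_eq (by simp)

lemma IsImprovingChain.mul_lt (h : IsImprovingChain strat cost ε s T) (hε : 0 ≤ ε)
    (hcost : ∀ r ℓ, 0 ≤ cost r ℓ) {B : Fin m → ℝ} (hB : ∀ r ℓ, cost r ℓ ≤ B r) {δ : ℝ}
    (hδ : ∀ s, ValidProfile strat s → ∀ i, δ ≤ playerCost cost s i) (hT : 0 < T) :
    T * (ε / (1 + ε) * δ) < n * ∑ r, B r := by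
  have hdrop := h.potential_add_lt hε hδ hT
  have hlow := potential_nonneg hcost (s T)
  have hup := potential_le hB (fun r => (hcost r 0).trans (hB r 0)) (s 0)
  linarith

lemma maxImprovingSeqLen_lt (hε : 0 ≤ ε) (hcost : ∀ r ℓ, 0 ≤ cost r ℓ) :
    maxImprovingSeqLen strat cost ε < (n + 1) ^ m := by
  have hle : maxImprovingSeqLen strat cost ε ≤ (n + 1) ^ m - 1 :=
    csSup_le' fun T ⟨_, hs⟩ => Nat.le_sub_one_of_lt (IsImprovingChain.length_lt hs hε hcost)
  have hpos : 0 < (n + 1) ^ m := by positivity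
  omega

lemma exists_isImprovingChain_of_le_maxImprovingSeqLen {t : ℕ} (ht : 0 < t)
    (htN : t ≤ maxImprovingSeqLen strat cost ε) : ∃ s, IsImprovingChain strat cost ε s t := by
  obtain ⟨T, ⟨s, hs⟩, htT⟩ := exists_lt_of_lt_csSup' (Nat.sub_one_lt_of_le ht htN)
  exact ⟨s, IsImprovingChain.mono hs (by omega)⟩

end Chain

section StepCost

variable {n m : ℕ} {dr : Fin m → ℕ} {b : (r : Fin m) → Fin (dr r) → ℕ}
  {a : (r : Fin m) → Fin (dr r) → ℝ}

lemma stepCost_nonneg (ha : ∀ r j, 0 ≤ a r j) (r : Fin m) (ℓ : ℕ) : 0 ≤ stepCost dr b a r ℓ :=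
  sum_nonneg fun j _ => ha r j

lemma stepCost_le (ha : ∀ r j, a r j ≤ 1) (r : Fin m) (ℓ : ℕ) : stepCost dr b a r ℓ ≤ dr r :=
  calc stepCost dr b a r ℓ ≤ (univ.filter fun j => b r j ≤ ℓ).card • (1 : ℝ) :=
        sum_le_card_nsmul _ _ _ fun j _ => ha r j
    _ ≤ dr r := by
        simpa using (Nat.cast_le (α := ℝ)).2 ((card_filter_le _ _).trans_eq (card_fin (dr r)))

/-- Since the first breakpoint is `1`, every resource in use costs at least its first jump. -/
lemma le_playerCost_stepCost (hdr : ∀ r, 0 < dr r) (hb1 : ∀ r, b r ⟨0, hdr r⟩ = 1)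
    (ha : ∀ r j, 0 ≤ a r j) {δ : ℝ} (hδ : ∀ r j, δ ≤ a r j) {s : Fin n → Finset (Fin m)}
    {i : Fin n} (hs : (s i).Nonempty) : δ ≤ playerCost (stepCost dr b a) s i := by
  obtain ⟨r, hr⟩ := hs
  have hload : b r ⟨0, hdr r⟩ ≤ load s r :=
    (hb1 r).trans_le (card_pos.2 ⟨i, mem_filter.2 ⟨mem_univ i, hr⟩⟩)
  calc δ ≤ a r ⟨0, hdr r⟩ := hδ r _
    _ ≤ stepCost dr b a r (load s r) :=
        single_le_sum (fun j _ => ha r j) (mem_filter.2 ⟨mem_univ _, hload⟩)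
    _ ≤ playerCost (stepCost dr b a) s i :=
        single_le_sum (fun r _ => stepCost_nonneg ha r _) hr

lemma exists_jump_lt_of_le_maxImprovingSeqLen {strat : Fin n → Set (Finset (Fin m))} {ε : ℝ}
    {t : ℕ} (ht : 0 < t) (htN : t ≤ maxImprovingSeqLen strat (stepCost dr b a) ε) (hε : 0 < ε)
    (hdr : ∀ r, 0 < dr r) (hb1 : ∀ r, b r ⟨0, hdr r⟩ = 1)
    (hstrat : ∀ i, ∀ t ∈ strat i, t.Nonempty) (ha0 : ∀ r j, 0 ≤ a r j)
    (ha1 : ∀ r j, a r j ≤ 1) :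
    ∃ r j, a r j < (1 + 1 / ε) * n * (∑ r, dr r : ℕ) / t := by
  obtain ⟨s, hs⟩ := exists_isImprovingChain_of_le_maxImprovingSeqLen ht htN
  by_contra! hge
  have hlt := hs.mul_lt hε.le (stepCost_nonneg ha0) (stepCost_le ha1)
    (fun s hs i => le_playerCost_stepCost hdr hb1 ha0 hge (hstrat i _ (hs i))) ht
  have hbudget : (t : ℝ) * (ε / (1 + ε) * ((1 + 1 / ε) * n * (∑ r, dr r : ℕ) / t)) =
      n * ∑ r, (dr r : ℝ) := by
    push_cast
    field_simp
    ring
  linarith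

end StepCost

section Probability

variable {Ω : Type*} [MeasurableSpace Ω] {P : Measure Ω} {φ : ℝ} {X : Ω → ℝ}

lemma PhiSmooth.map_apply_le (h : PhiSmooth P φ X) {S : Set ℝ} (hS : MeasurableSet S) :
    P.map X S ≤ ENNReal.ofReal φ * volume (S ∩ Set.Icc 0 1) := by
  obtain ⟨-, f, hmap, hbd, hsupp⟩ := h
  have hf : ∀ x, f x ≤ (Set.Icc (0 : ℝ) 1).indicator (fun _ => ENNReal.ofReal φ) x := by
    intro x
    by_cases hx : x ∈ Set.Icc (0 : ℝ) 1
    · simpa [hx] using hbd x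
    · simp [hsupp x hx]
  calc P.map X S = ∫⁻ x in S, f x := by rw [hmap, withDensity_apply f hS]
    _ ≤ ∫⁻ x in S, (Set.Icc (0 : ℝ) 1).indicator (fun _ => ENNReal.ofReal φ) x :=
        lintegral_mono hf
    _ = ENNReal.ofReal φ * volume (S ∩ Set.Icc 0 1) := by
        rw [lintegral_indicator_const measurableSet_Icc, Measure.restrict_apply measurableSet_Icc,
          Set.inter_comm]

lemma PhiSmooth.ae_mem_Icc (h : PhiSmooth P φ X) : ∀ᵐ ω ∂P, X ω ∈ Set.Icc 0 1 := by
  have hnull := h.map_apply_le (S := (Set.Icc 0 1)ᶜ) measurableSet_Icc.compl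
  rw [Set.compl_inter_self, measure_empty, mul_zero, nonpos_iff_eq_zero,
    Measure.map_apply h.1 measurableSet_Icc.compl] at hnull
  exact hnull

lemma PhiSmooth.measure_lt_le (h : PhiSmooth P φ X) {x : ℝ} (hx : 0 ≤ x) :
    P {ω | X ω < x} ≤ ENNReal.ofReal (φ * x) :=
  calc P {ω | X ω < x} = P.map X (Set.Iio x) := (Measure.map_apply h.1 measurableSet_Iio).symm
    _ ≤ ENNReal.ofReal φ * volume (Set.Iio x ∩ Set.Icc 0 1) := h.map_apply_le measurableSet_Iio
    _ ≤ ENNReal.ofReal φ * volume (Set.Ico 0 x) := by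
        gcongr
        exact fun y hy => ⟨hy.2.1, hy.1⟩
    _ = ENNReal.ofReal (φ * x) := by rw [Real.volume_Ico, sub_zero, ENNReal.ofReal_mul' hx]

lemma measure_iUnion_lt_le {ι : Type*} [Fintype ι] {X : ι → Ω → ℝ}
    (h : ∀ p, PhiSmooth P φ (X p)) {x : ℝ} (hx : 0 ≤ x) :
    P (⋃ p, {ω | X p ω < x}) ≤ ENNReal.ofReal (Fintype.card ι * (φ * x)) :=
  calc P (⋃ p, {ω | X p ω < x}) ≤ ∑ p, P {ω | X p ω < x} := measure_iUnion_fintype_le _ _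
    _ ≤ ∑ _p : ι, ENNReal.ofReal (φ * x) := sum_le_sum fun p _ => (h p).measure_lt_le hx
    _ = ENNReal.ofReal (Fintype.card ι * (φ * x)) := by
        rw [sum_const, card_univ, nsmul_eq_mul, ← ENNReal.ofReal_natCast,
          ← ENNReal.ofReal_mul (Nat.cast_nonneg _)]

end Probability

lemma sum_Icc_two_inv_le_log (K : ℕ) : ∑ t ∈ Icc 2 K, (t : ℝ)⁻¹ ≤ Real.log K := by
  rcases K.eq_zero_or_pos with rfl | hK
  · simp
  have hharm := harmonic_le_one_add_log K
  simp only [harmonic_eq_sum_Icc, Rat.cast_sum, Rat.cast_inv, Rat.cast_natCast] at hharm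
  rw [← insert_Icc_succ_left_eq_Icc hK, sum_insert (by simp), Order.succ_eq_add_one] at hharm
  norm_num at hharm
  linarith

/-- Tail-sum bound, using `P (E 1) ≤ 1` and `1/2 + ⋯ + 1/K ≤ log K`. -/
lemma lintegral_le_of_measure_le_div {Ω : Type*} [MeasurableSpace Ω] {P : Measure Ω}
    [IsProbabilityMeasure P] {N : Ω → ℕ} {K : ℕ} {E : ℕ → Set Ω} {C : ℝ} (hC : 0 ≤ C)
    (hE : ∀ t, MeasurableSet (E t)) (hNK : ∀ᵐ ω ∂P, N ω ≤ K)
    (hNE : ∀ᵐ ω ∂P, ∀ t ∈ Icc 1 (N ω), ω ∈ E t)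
    (hPE : ∀ t, 2 ≤ t → P (E t) ≤ ENNReal.ofReal (C / t)) :
    ∫⁻ ω, (N ω : ENNReal) ∂P ≤ ENNReal.ofReal (C * Real.log K + 1) := by
  have hcount : ∀ᵐ ω ∂P, (N ω : ENNReal) ≤ ∑ t ∈ Icc 1 K, (E t).indicator 1 ω := by
    filter_upwards [hNK, hNE] with ω hK hmem
    calc (N ω : ENNReal) = ∑ t ∈ Icc 1 (N ω), (E t).indicator 1 ω := by
          rw [sum_congr rfl fun t ht => Set.indicator_of_mem (hmem t ht) _]
          simp
      _ ≤ ∑ t ∈ Icc 1 K, (E t).indicator 1 ω :=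
          sum_le_sum_of_subset (Icc_subset_Icc_right hK)
  have hsplit : Icc 1 K ⊆ insert 1 (Icc 2 K) := fun t ht => by
    simp only [mem_insert, mem_Icc] at ht ⊢
    omega
  calc ∫⁻ ω, (N ω : ENNReal) ∂P ≤ ∫⁻ ω, ∑ t ∈ Icc 1 K, (E t).indicator 1 ω ∂P :=
        lintegral_mono_ae hcount
    _ = ∑ t ∈ Icc 1 K, P (E t) := by
        rw [lintegral_finsetSum _ fun t _ => measurable_one.indicator (hE t)]
        simp only [lintegral_indicator_one (hE _)]
    _ ≤ P (E 1) + ∑ t ∈ Icc 2 K, P (E t) :=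
        (sum_le_sum_of_subset hsplit).trans_eq (sum_insert (by simp))
    _ ≤ 1 + ∑ t ∈ Icc 2 K, ENNReal.ofReal (C * (t : ℝ)⁻¹) :=
        add_le_add prob_le_one (sum_le_sum fun t ht => hPE t (mem_Icc.1 ht).1)
    _ = ENNReal.ofReal (C * ∑ t ∈ Icc 2 K, (t : ℝ)⁻¹ + 1) := by
        rw [mul_sum, ← ENNReal.ofReal_sum_of_nonneg fun t _ => by positivity,
          ENNReal.ofReal_add (by positivity) zero_le_one, ENNReal.ofReal_one, add_comm]
    _ ≤ ENNReal.ofReal (C * Real.log K + 1) := by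
        gcongr
        exact sum_Icc_two_inv_le_log K

theorem smoothed_step_function_brd_bound_general
    {Ω : Type*} [MeasurableSpace Ω] (P : Measure Ω) [IsProbabilityMeasure P]
    {n m : ℕ}
    (φ : ℝ) (hφ : 1 ≤ φ)
    (strat : Fin n → Set (Finset (Fin m)))
    (hstrat' : ∀ i, ∀ t ∈ strat i, t.Nonempty)
    (dr : Fin m → ℕ) (hdr : ∀ r, 0 < dr r)
    (hd2 : 2 ≤ ∑ r : Fin m, dr r)
    (b : (r : Fin m) → Fin (dr r) → ℕ)
    (hb1 : ∀ r, b r ⟨0, hdr r⟩ = 1)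
    (c : ((r : Fin m) × Fin (dr r)) → Ω → ℝ)
    (hsmooth : ∀ p, PhiSmooth P φ (c p))
    (ε : ℝ) (hε : 0 < ε) :
    ∫⁻ ω, (maxImprovingSeqLen strat (stepCost dr b fun r j => c ⟨r, j⟩ ω) ε : ENNReal) ∂P
      ≤ ENNReal.ofReal
          (φ * (1 + 1 / ε) * n * (∑ r : Fin m, dr r : ℕ) ^ 2 *
              (m * Real.log (n + 1) + Real.log (∑ r : Fin m, dr r : ℕ)) + 1) := by
  set d := ∑ r : Fin m, dr r
  set β := (1 + 1 / ε) * n * d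
  have hφ0 : 0 ≤ φ := by linarith
  have hunit : ∀ᵐ ω ∂P, ∀ p, c p ω ∈ Set.Icc 0 1 := ae_all_iff.2 fun p => (hsmooth p).ae_mem_Icc
  have hmean := lintegral_le_of_measure_le_div (K := (n + 1) ^ m)
    (E := fun t => ⋃ p, {ω | c p ω < β / t}) (C := d * φ * β) (by positivity)
    (fun t => MeasurableSet.iUnion fun p => measurableSet_lt (hsmooth p).1 measurable_const)
    (hunit.mono fun ω hω => (maxImprovingSeqLen_lt hε.le
      (stepCost_nonneg fun r j => (hω ⟨r, j⟩).1)).le)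
    (hunit.mono fun ω hω t ht => by
      obtain ⟨r, j, hrj⟩ := exists_jump_lt_of_le_maxImprovingSeqLen (mem_Icc.1 ht).1
        (mem_Icc.1 ht).2 hε hdr hb1 hstrat' (fun r j => (hω ⟨r, j⟩).1) fun r j => (hω ⟨r, j⟩).2
      exact Set.mem_iUnion.2 ⟨⟨r, j⟩, hrj⟩)
    (fun t _ => (measure_iUnion_lt_le hsmooth (by positivity)).trans_eq <| by
      rw [Fintype.card_sigma]
      simp only [Fintype.card_fin, d, mul_div_assoc, mul_assoc])
  refine hmean.trans (ENNReal.ofReal_le_ofReal ?_)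
  have hlogd : 0 ≤ Real.log d := Real.log_nonneg (by exact_mod_cast (by omega : 1 ≤ d))
  have hcoef : 0 ≤ φ * (1 + 1 / ε) * n * (d : ℝ) ^ 2 := by positivity
  have hlogK : Real.log (((n + 1) ^ m : ℕ) : ℝ) = m * Real.log (n + 1) := by
    push_cast
    exact Real.log_pow _ m
  rw [hlogK]
  nlinarith

/-- in a `φ`-smooth step-function congestion game with `n` players, `m`
resources and `d = Σ_r d_r ≥ 2` total breakpoints (the jump values being independent
`φ`-smooth random variables, the breakpoints fixed), for any `ε > 0` the expected length
`E[T]` of the longest sequence of consecutive `(1+ε)`-improving moves satisfies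
`E[T] ≤ φ·(1 + 1/ε)·n·d²·(m·ln(n+1) + ln d) + 1`. -/
theorem smoothed_step_function_brd_bound
    {Ω : Type*} [MeasurableSpace Ω] (P : Measure Ω) [IsProbabilityMeasure P]
    {n m : ℕ} (hn : 0 < n)
    (φ : ℝ) (hφ : 1 ≤ φ)
    (strat : Fin n → Set (Finset (Fin m)))
    (hstrat : ∀ i, (strat i).Nonempty)
    (hstrat' : ∀ i, ∀ t ∈ strat i, t.Nonempty)
    (dr : Fin m → ℕ) (hdr : ∀ r, 0 < dr r)
    (hd2 : 2 ≤ ∑ r : Fin m, dr r)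
    (b : (r : Fin m) → Fin (dr r) → ℕ)
    (hb1 : ∀ r, b r ⟨0, hdr r⟩ = 1)
    (hbmono : ∀ r, StrictMono (b r))
    (hbn : ∀ r j, b r j ≤ n)
    (c : ((r : Fin m) × Fin (dr r)) → Ω → ℝ)
    (hsmooth : ∀ p, PhiSmooth P φ (c p))
    (hindep : iIndepFun c P)
    (ε : ℝ) (hε : 0 < ε) :
    ∫⁻ ω, (maxImprovingSeqLen strat (stepCost dr b fun r j => c ⟨r, j⟩ ω) ε : ENNReal) ∂P
      ≤ ENNReal.ofReal
          (φ * (1 + 1 / ε) * n * (∑ r : Fin m, dr r : ℕ) ^ 2 *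
              (m * Real.log (n + 1) + Real.log (∑ r : Fin m, dr r : ℕ)) + 1) :=
  smoothed_step_function_brd_bound_general P φ hφ strat hstrat' dr hdr hd2 b hb1 c hsmooth ε hε
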